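/- arXiv:1311.4478 — 2 statements merged into one kernel-verified Lean document; each statement's English description precedes it below -/
import Mathlib

section
/- Let p be a prime, k a field of characteristic p, γ a root of unity in k of order q, and g(ζ) = γζ + ... a power series in k[[ζ]]. If i₀(g^q) := ord((g^q(ζ) − ζ)/ζ) is finite, then q divides i₀(g^q). -/
/-! `g^q` commutes with `g`. Write `g^q = ζ + c ζ^(i+1) + O(ζ^(i+2))` with `c ≠ 0` and `i ≥ 1`.
Comparing the coefficients of `ζ^(i+1)` on both sides of `g ∘ g^q = g^q ∘ g` gives
`a + γ c = a + c γ^(i+1)`, where `a` is the coefficient of `ζ^(i+1)` in `g`; hence `γ^i = 1`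
and the order `q` of `γ` divides `i`. -/

open PowerSeries

/-- Formal composition `f ∘ g` of power series (correct when `g` has zero constant term). -/
noncomputable def fcomp {k : Type*} [CommRing k] (f g : PowerSeries k) : PowerSeries k :=
  PowerSeries.mk fun n =>
    ∑ m ∈ Finset.range (n + 1), (PowerSeries.coeff m f) * (PowerSeries.coeff n (g ^ m))

/-- `m`-th iterate of a power series with zero constant term. -/
noncomputable def fit {k : Type*} [CommRing k] (g : PowerSeries k) : ℕ → PowerSeries k
  | 0 => PowerSeries.X
  | n + 1 => fcomp g (fit g n)

theorem pow_add_dvd_pow_succ_sub_pow_succ {R : Type*} [CommRing R] {x y : R} {n : ℕ}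
    (hn : n ≠ 0) (h : x ^ n ∣ y - x) (m : ℕ) : x ^ (n + m) ∣ y ^ (m + 1) - x ^ (m + 1) := by
  have hxy : x ∣ y := by simpa using ((dvd_pow_self x hn).trans h).add (dvd_refl x)
  induction m with
  | zero => simpa using h
  | succ m ih =>
    have hsplit : y ^ (m + 2) - x ^ (m + 2) =
        y * (y ^ (m + 1) - x ^ (m + 1)) + x ^ (m + 1) * (y - x) := by
      ring
    rw [hsplit]
    refine dvd_add ?_ ?_
    · rw [← add_assoc, pow_succ']
      exact mul_dvd_mul hxy ih
    · rw [show n + (m + 1) = (m + 1) + n by omega, pow_add]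
      exact mul_dvd_mul_left _ h

namespace PowerSeries

variable {R : Type*} [CommRing R]

theorem coeff_pow_self_of_constantCoeff_eq_zero {g : R⟦X⟧} (hg : constantCoeff g = 0) (m : ℕ) :
    coeff m (g ^ m) = coeff 1 g ^ m := by
  obtain ⟨h, rfl⟩ := X_dvd_iff.mpr hg
  rw [mul_pow, coeff_X_pow_mul', if_pos le_rfl, Nat.sub_self, coeff_zero_eq_constantCoeff,
    map_pow, coeff_succ_X_mul, coeff_zero_eq_constantCoeff]

theorem coeff_pow_eq_zero_of_constantCoeff_eq_zero {g : R⟦X⟧} (hg : constantCoeff g = 0)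
    {n m : ℕ} (h : n < m) : coeff n (g ^ m) = 0 :=
  X_pow_dvd_iff.mp (pow_dvd_pow_of_dvd (X_dvd_iff.mpr hg) m) n h

theorem coeff_subst_eq_sum_range {f g : R⟦X⟧} (hg : constantCoeff g = 0) (n : ℕ) :
    coeff n (f.subst g) = ∑ m ∈ Finset.range (n + 1), coeff m f * coeff n (g ^ m) := by
  rw [coeff_subst' (.of_constantCoeff_zero' hg)]
  refine finsum_eq_sum_of_support_subset _ fun m hm => ?_
  by_contra hmn
  simp only [Finset.coe_range, Set.mem_Iio, not_lt] at hmn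
  exact hm (by simp [coeff_pow_eq_zero_of_constantCoeff_eq_zero hg (show n < m by omega)])

end PowerSeries

section Composition

variable {R : Type*} [CommRing R]

theorem coeff_fcomp (f g : R⟦X⟧) (n : ℕ) :
    coeff n (fcomp f g) = ∑ m ∈ Finset.range (n + 1), coeff m f * coeff n (g ^ m) :=
  coeff_mk _ _

theorem fcomp_eq_subst (f : R⟦X⟧) {g : R⟦X⟧} (hg : constantCoeff g = 0) :
    fcomp f g = f.subst g := by
  ext n
  rw [coeff_fcomp, coeff_subst_eq_sum_range hg]

theorem constantCoeff_fcomp (f g : R⟦X⟧) : constantCoeff (fcomp f g) = constantCoeff f := by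
  rw [← coeff_zero_eq_constantCoeff_apply, coeff_fcomp]
  simp

theorem constantCoeff_fit {g : R⟦X⟧} (hg : constantCoeff g = 0) :
    ∀ n, constantCoeff (fit g n) = 0
  | 0 => constantCoeff_X
  | _ + 1 => (constantCoeff_fcomp _ _).trans hg

theorem fcomp_assoc (f : R⟦X⟧) {a b : R⟦X⟧} (ha : constantCoeff a = 0)
    (hb : constantCoeff b = 0) : fcomp f (fcomp a b) = fcomp (fcomp f a) b := by
  have hab : constantCoeff (fcomp a b) = 0 := (constantCoeff_fcomp a b).trans ha
  rw [fcomp_eq_subst _ hab, fcomp_eq_subst _ hb, fcomp_eq_subst _ ha, fcomp_eq_subst _ hb,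
    subst_comp_subst_apply (.of_constantCoeff_zero' ha) (.of_constantCoeff_zero' hb)]

theorem fcomp_fit_comm {g : R⟦X⟧} (hg : constantCoeff g = 0) (n : ℕ) :
    fcomp g (fit g n) = fcomp (fit g n) g := by
  induction n with
  | zero =>
    rw [fit, fcomp_eq_subst _ constantCoeff_X, fcomp_eq_subst _ hg, X_subst,
      subst_X (.of_constantCoeff_zero' hg)]
  | succ n ih =>
    calc fcomp g (fcomp g (fit g n)) = fcomp g (fcomp (fit g n) g) := by rw [ih]
      _ = fcomp (fcomp g (fit g n)) g := fcomp_assoc g (constantCoeff_fit hg n) hg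

theorem coeff_pow_of_X_pow_dvd_sub_X {G : R⟦X⟧} {n m : ℕ} (hn : n ≠ 0) (hG : X ^ n ∣ G - X)
    (hm : 2 ≤ m) : coeff n (G ^ m) = coeff n (X ^ m) := by
  obtain ⟨m, rfl⟩ := Nat.exists_eq_add_of_le' hm
  rw [← sub_eq_zero, ← map_sub]
  exact X_pow_dvd_iff.mp (pow_add_dvd_pow_succ_sub_pow_succ hn hG (m + 1)) n (by omega)

theorem coeff_fcomp_of_inner_X_pow_dvd_sub_X (f : R⟦X⟧) {G : R⟦X⟧} {n : ℕ} (hn : 2 ≤ n)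
    (hG : X ^ n ∣ G - X) : coeff n (fcomp f G) = coeff n f + coeff 1 f * coeff n G := by
  rw [coeff_fcomp, Finset.sum_eq_add_of_mem n 1 (by simp) (by simp; omega) (by omega),
    coeff_pow_of_X_pow_dvd_sub_X (by omega) hG hn, coeff_X_pow_self, mul_one, pow_one]
  intro m hm ⟨hmn, hm1⟩
  obtain rfl | hm0 := Nat.eq_zero_or_pos m
  · simp [coeff_one, show n ≠ 0 by omega]
  · rw [coeff_pow_of_X_pow_dvd_sub_X (by omega) hG (by omega), coeff_X_pow, if_neg hmn.symm,
      mul_zero]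

theorem coeff_fcomp_of_outer_X_pow_dvd_sub_X {G g : R⟦X⟧} {n : ℕ} (hn : 2 ≤ n)
    (hG : X ^ n ∣ G - X) (hg : constantCoeff g = 0) :
    coeff n (fcomp G g) = coeff n g + coeff n G * coeff 1 g ^ n := by
  have hlow : ∀ m < n, coeff m G = coeff m X := fun m hm => by
    rw [← sub_eq_zero, ← map_sub]
    exact X_pow_dvd_iff.mp hG m hm
  rw [coeff_fcomp, Finset.sum_eq_add_of_mem 1 n (by simp; omega) (by simp) (by omega),
    hlow 1 (by omega), coeff_one_X, one_mul, pow_one,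
    coeff_pow_self_of_constantCoeff_eq_zero hg]
  intro m hm ⟨hm1, hmn⟩
  rw [hlow m (by simp at hm; omega), coeff_X, if_neg hm1, zero_mul]

end Composition

theorem stmt7_general {k : Type*} [Field k]
    (γ : k) (q : ℕ) (hq0 : 0 < q) (hγq : γ ^ q = 1)
    (hqmin : ∀ j, 0 < j → j < q → γ ^ j ≠ 1)
    (g : PowerSeries k) (hg0 : PowerSeries.constantCoeff g = 0)
    (hg1 : PowerSeries.coeff 1 g = γ)
    (i : ℕ) (hi : PowerSeries.order (fit g q - PowerSeries.X) = ((i + 1 : ℕ) : ℕ∞)) :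
    q ∣ i := by
  obtain rfl | hi0 := Nat.eq_zero_or_pos i
  · exact dvd_zero q
  obtain ⟨hcoeff, hlow⟩ := order_eq_nat.mp hi
  have hX : X ^ (i + 1) ∣ fit g q - X := X_pow_dvd_iff.mpr hlow
  set c := coeff (i + 1) (fit g q)
  have hc : c ≠ 0 := by rwa [map_sub, coeff_X, if_neg (by omega), sub_zero] at hcoeff
  have hγ : γ ≠ 0 := (IsUnit.of_pow_eq_one hγq hq0.ne').ne_zero
  have hcomm := congrArg (coeff (i + 1)) (fcomp_fit_comm hg0 q)
  rw [coeff_fcomp_of_inner_X_pow_dvd_sub_X g (by omega) hX,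
    coeff_fcomp_of_outer_X_pow_dvd_sub_X (by omega) hX hg0, hg1] at hcomm
  have hγi : γ ^ i = 1 :=
    mul_left_cancel₀ (mul_ne_zero hc hγ) (by linear_combination hcomm.symm)
  have hord : orderOf γ = q := (orderOf_eq_iff hq0).mpr ⟨hγq, fun m hm hm0 => hqmin m hm0 hm⟩
  exact hord ▸ orderOf_dvd_of_pow_eq_one hγi

/-- Let `k` be a field of characteristic `p`, `γ ∈ k` a root of unity of order `q`, and
`g(ζ) = γζ + ⋯ ∈ k[[ζ]]`.  If `i₀(g^q) = ord((g^q(ζ) - ζ)/ζ)` is finite — i.e. the order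
of `g^q(ζ) - ζ` equals `i + 1` for some natural number `i` — then `q ∣ i`. -/
theorem stmt7 {k : Type*} [Field k] (p : ℕ) (hp : p.Prime) [CharP k p]
    (γ : k) (q : ℕ) (hq0 : 0 < q) (hγq : γ ^ q = 1)
    (hqmin : ∀ j, 0 < j → j < q → γ ^ j ≠ 1)
    (g : PowerSeries k) (hg0 : PowerSeries.constantCoeff g = 0)
    (hg1 : PowerSeries.coeff 1 g = γ)
    (i : ℕ) (hi : PowerSeries.order (fit g q - PowerSeries.X) = ((i + 1 : ℕ) : ℕ∞)) :
    q ∣ i :=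
  stmt7_general γ q hq0 hγq hqmin g hg0 hg1 i hi
end

section
/- Let p be a prime, k a field of characteristic p, and q ≥ 2 an integer not divisible by p. Let γ ∈ k* with γ^q = 1 and a₁, a₂ ∈ k, and let g(ζ) ∈ k[[ζ]] satisfy g(ζ) ≡ γζ(1 + a₁ζ^q + a₂ζ^{2q}) mod ζ^{2q+2}. Then for every integer ℓ ≥ 1, g^ℓ(ζ) ≡ γ^ℓ ζ (1 + ℓ·a₁·ζ^q + (ℓ·a₂ + (q+1)·(ℓ(ℓ−1)/2)·a₁²)·ζ^{2q}) mod ζ^{2q+2}. -/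
open PowerSeries

section

variable {R : Type*} [CommRing R]

theorem fcomp_add (f₁ f₂ h : R⟦X⟧) : fcomp (f₁ + f₂) h = fcomp f₁ h + fcomp f₂ h := by
  ext n
  simp [fcomp, add_mul, Finset.sum_add_distrib]

theorem fcomp_C_mul_X_pow (c : R) (m : ℕ) {h : R⟦X⟧} (hh : X ∣ h) :
    fcomp (C c * X ^ m) h = C c * h ^ m := by
  ext n
  have hlow : n < m → coeff n (h ^ m) = 0 :=
    X_pow_dvd_iff.1 (pow_dvd_pow_of_dvd hh m) n
  simp only [fcomp, coeff_mk, coeff_C_mul, coeff_X_pow, mul_ite, mul_one, mul_zero, ite_mul,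
    zero_mul, Finset.sum_ite_eq', Finset.mem_range]
  split_ifs with hmn
  · rfl
  · rw [hlow (by omega), mul_zero]

theorem fcomp_sub_fcomp_left {N : ℕ} {f f' : R⟦X⟧} (hf : X ^ N ∣ f - f') (h : R⟦X⟧) :
    X ^ N ∣ fcomp f h - fcomp f' h := by
  rw [X_pow_dvd_iff] at hf ⊢
  intro n hn
  simp only [fcomp, map_sub, coeff_mk, ← Finset.sum_sub_distrib, ← sub_mul]
  refine Finset.sum_eq_zero fun m hm => ?_
  rw [← map_sub, hf m (by simp at hm; omega), zero_mul]

theorem fcomp_sub_fcomp_right {N : ℕ} (f : R⟦X⟧) {h h' : R⟦X⟧} (hh : X ^ N ∣ h - h') :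
    X ^ N ∣ fcomp f h - fcomp f h' := by
  rw [X_pow_dvd_iff]
  intro n hn
  simp only [fcomp, map_sub, coeff_mk, ← Finset.sum_sub_distrib, ← mul_sub]
  refine Finset.sum_eq_zero fun m _ => ?_
  rw [← map_sub, X_pow_dvd_iff.1 (hh.trans (sub_dvd_pow_sub_pow h h' m)) n hn, mul_zero]

noncomputable def normalForm (q : ℕ) (γ a₁ a₂ : R) : R⟦X⟧ :=
  C γ * X * (1 + C a₁ * X ^ q + C a₂ * X ^ (2 * q))

theorem X_dvd_normalForm (q : ℕ) (γ a₁ a₂ : R) : X ∣ normalForm q γ a₁ a₂ :=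
  (dvd_mul_left X (C γ)).mul_right _

theorem fcomp_normalForm (q : ℕ) (γ a₁ a₂ : R) {h : R⟦X⟧} (hh : X ∣ h) :
    fcomp (normalForm q γ a₁ a₂) h
      = C γ * h + C (γ * a₁) * h ^ (q + 1) + C (γ * a₂) * h ^ (2 * q + 1) := by
  have hmon : normalForm q γ a₁ a₂
      = C γ * X ^ 1 + C (γ * a₁) * X ^ (q + 1) + C (γ * a₂) * X ^ (2 * q + 1) := by
    simp only [normalForm, map_mul]
    ring
  rw [hmon, fcomp_add, fcomp_add, fcomp_C_mul_X_pow _ _ hh, fcomp_C_mul_X_pow _ _ hh,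
    fcomp_C_mul_X_pow _ _ hh, pow_one]

theorem fcomp_normalForm_normalForm {q : ℕ} (hq : 1 ≤ q) {c : R} (hc : c ^ q = 1)
    (γ a₁ a₂ b₁ b₂ : R) :
    X ^ (2 * q + 2) ∣ fcomp (normalForm q γ a₁ a₂) (normalForm q c b₁ b₂)
      - normalForm q (γ * c) (a₁ + b₁) (a₂ + b₂ + (q + 1) * a₁ * b₁) := by
  set u : R⟦X⟧ := C b₁ + C b₂ * X ^ q
  have hH : normalForm q c b₁ b₂ = C c * X * (1 + X ^ q * u) := by
    simp only [normalForm, u]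
    ring
  obtain ⟨r, hr⟩ := sq_dvd_add_pow_sub_sub (X ^ q * u) 1 (q + 1)
  obtain ⟨s, hs⟩ := sub_dvd_pow_sub_pow (1 + X ^ q * u) 1 (2 * q + 1)
  have hc₁ : C c ^ (q + 1) = C c := by rw [← map_pow, pow_succ, hc, one_mul]
  have hc₂ : C c ^ (2 * q + 1) = C c := by rw [← map_pow, pow_succ, pow_mul', hc, one_pow, one_mul]
  rw [fcomp_normalForm _ _ _ _ (X_dvd_normalForm q c b₁ b₂), hH, mul_pow, mul_pow, hc₁, mul_pow,
    mul_pow, hc₂]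
  -- every discarded term is a multiple of `X ^ (3 * q + 1)`
  refine (pow_dvd_pow X (by omega : 2 * q + 2 ≤ 3 * q + 1)).trans
    ⟨C (γ * c) * (C a₁ * ((q + 1) * C b₂ + u ^ 2 * r) + C a₂ * u * s), ?_⟩
  simp only [normalForm, u, map_mul, map_add, map_natCast, map_one] at hr hs ⊢
  push_cast at hr ⊢
  linear_combination (C γ * C a₁ * C c * X ^ (q + 1)) * hr
    + (C γ * C a₂ * C c * X ^ (2 * q + 1)) * hs

theorem fcomp_sub_normalForm_dvd {q : ℕ} (hq : 1 ≤ q) {f h : R⟦X⟧} {γ a₁ a₂ c b₁ b₂ : R}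
    (hc : c ^ q = 1) (hf : X ^ (2 * q + 2) ∣ f - normalForm q γ a₁ a₂)
    (hh : X ^ (2 * q + 2) ∣ h - normalForm q c b₁ b₂) :
    X ^ (2 * q + 2) ∣
      fcomp f h - normalForm q (γ * c) (a₁ + b₁) (a₂ + b₂ + (q + 1) * a₁ * b₁) := by
  have := (fcomp_sub_fcomp_left hf h).add ((fcomp_sub_fcomp_right (normalForm q γ a₁ a₂) hh).add
    (fcomp_normalForm_normalForm hq hc γ a₁ a₂ b₁ b₂))
  rwa [sub_add_sub_cancel, sub_add_sub_cancel] at this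

theorem fit_sub_normalForm_dvd {q : ℕ} (hq : 1 ≤ q) {γ a₁ a₂ : R} (hγ : γ ^ q = 1) {g : R⟦X⟧}
    (hg : X ^ (2 * q + 2) ∣ g - normalForm q γ a₁ a₂) (ℓ : ℕ) :
    X ^ (2 * q + 2) ∣ fit g ℓ - normalForm q (γ ^ ℓ) (ℓ * a₁)
      (ℓ * a₂ + ((q + 1 : ℕ) : R) * ((ℓ * (ℓ - 1) / 2 : ℕ) : R) * a₁ ^ 2) := by
  induction ℓ with
  | zero => simp [fit, normalForm]
  | succ n ih =>
    have hγn : (γ ^ n) ^ q = 1 := by rw [← pow_mul, mul_comm, pow_mul, hγ, one_pow]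
    convert fcomp_sub_normalForm_dvd hq hγn hg ih using 3
    · rfl
    · rw [pow_succ']
    · push_cast
      ring
    · rw [Nat.triangle_succ]
      push_cast
      ring

end

theorem stmt13_general {k : Type*} [Field k]
    (q : ℕ) (hq : 2 ≤ q)
    (γ : k) (hγq : γ ^ q = 1) (a₁ a₂ : k)
    (g : PowerSeries k)
    (hg : (PowerSeries.X : PowerSeries k) ^ (2 * q + 2) ∣
      g - PowerSeries.C γ * PowerSeries.X *
        (1 + PowerSeries.C a₁ * PowerSeries.X ^ q
           + PowerSeries.C a₂ * PowerSeries.X ^ (2 * q))) :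
    ∀ ℓ : ℕ, 1 ≤ ℓ →
      (PowerSeries.X : PowerSeries k) ^ (2 * q + 2) ∣
        fit g ℓ - PowerSeries.C (γ ^ ℓ) * PowerSeries.X *
          (1 + PowerSeries.C ((ℓ : k) * a₁) * PowerSeries.X ^ q
             + PowerSeries.C ((ℓ : k) * a₂
                 + ((q + 1 : ℕ) : k) * ((ℓ * (ℓ - 1) / 2 : ℕ) : k) * a₁ ^ 2)
               * PowerSeries.X ^ (2 * q)) :=
  fun ℓ _ => fit_sub_normalForm_dvd (by omega) hγq hg ℓ

/-- If `g(ζ) ≡ γζ(1 + a₁ζ^q + a₂ζ^{2q}) mod ζ^{2q+2}` with `γ^q = 1`, `q ≥ 2` not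
divisible by `p = char k`, then for every `ℓ ≥ 1`,
`g^ℓ(ζ) ≡ γ^ℓ ζ (1 + ℓa₁ζ^q + (ℓa₂ + (q+1)·(ℓ(ℓ-1)/2)·a₁²)ζ^{2q}) mod ζ^{2q+2}`. -/
theorem stmt13 {k : Type*} [Field k] (p : ℕ) (hp : p.Prime) [CharP k p]
    (q : ℕ) (hq : 2 ≤ q) (hpq : ¬ p ∣ q)
    (γ : k) (hγ0 : γ ≠ 0) (hγq : γ ^ q = 1) (a₁ a₂ : k)
    (g : PowerSeries k)
    (hg : (PowerSeries.X : PowerSeries k) ^ (2 * q + 2) ∣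
      g - PowerSeries.C γ * PowerSeries.X *
        (1 + PowerSeries.C a₁ * PowerSeries.X ^ q
           + PowerSeries.C a₂ * PowerSeries.X ^ (2 * q))) :
    ∀ ℓ : ℕ, 1 ≤ ℓ →
      (PowerSeries.X : PowerSeries k) ^ (2 * q + 2) ∣
        fit g ℓ - PowerSeries.C (γ ^ ℓ) * PowerSeries.X *
          (1 + PowerSeries.C ((ℓ : k) * a₁) * PowerSeries.X ^ q
             + PowerSeries.C ((ℓ : k) * a₂
                 + ((q + 1 : ℕ) : k) * ((ℓ * (ℓ - 1) / 2 : ℕ) : k) * a₁ ^ 2)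
               * PowerSeries.X ^ (2 * q)) :=
  stmt13_general q hq γ hγq a₁ a₂ g hg
end
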